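/- There is an absolute constant c such that for every K^# formula φ there exists a GNN (with sum aggregation, combination functions of the form COMB(x,y)=σ(xC+yA+b) with integer matrices C, A and integer vector b, and classification reading one component of the final state) whose number of layers is at most c·(md(φ)+1) and which recognizes exactly the class of pointed graphs satisfying φ. -/

import Mathlib

open scoped Classical

/-- A finite labeled directed graph: edges and a valuation of atomic
propositions (indexed by `ℕ`) at each vertex. -/
structure LGraph (V : Type) [Fintype V] where
  edge : V → V → Bool
  label : V → ℕ → Bool

mutual
/-- Formulas of the logic `K^#`. -/
inductive KForm : Type where
  | atom : ℕ → KForm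
  | not : KForm → KForm
  | or : KForm → KForm → KForm
  | ge0 : KExpr → KForm
/-- Expressions of the logic `K^#`. -/
inductive KExpr : Type where
  | const : ℤ → KExpr
  | ind : KForm → KExpr
  | count : KForm → KExpr
  | add : KExpr → KExpr → KExpr
  | scale : ℤ → KExpr → KExpr
end

mutual
/-- Truth of a `K^#` formula at a pointed graph. -/
def KForm.sat {V : Type} [Fintype V] (G : LGraph V) (u : V) : KForm → Bool
  | .atom p => G.label u p
  | .not φ => !(KForm.sat G u φ)
  | .or φ ψ => KForm.sat G u φ || KForm.sat G u ψ
  | .ge0 E => decide (0 ≤ KExpr.val G u E)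
/-- Value of a `K^#` expression at a pointed graph. -/
def KExpr.val {V : Type} [Fintype V] (G : LGraph V) (u : V) : KExpr → ℤ
  | .const c => c
  | .ind φ => if KForm.sat G u φ then 1 else 0
  | .count φ =>
      ((Finset.univ.filter (fun v => G.edge u v = true ∧ KForm.sat G v φ = true)).card : ℤ)
  | .add E₁ E₂ => KExpr.val G u E₁ + KExpr.val G u E₂
  | .scale c E => c * KExpr.val G u E
end

/-- The clipped (truncated) ReLU `σ(x) = min(max(0,x),1)`. -/
def clip (x : ℝ) : ℝ := min (max 0 x) 1

/-- A sum-aggregation GNN: dimension `d`, number `k ≤ d` of input propositions,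
`L` layers, each layer `t` given by integer matrices `C t`, `A t` and an integer
bias vector `b t` (the combination function being `σ(xC + yA + b)` where `y` is
the sum of the states of the successors), and a classification function `cls`. -/
structure GNN where
  d : ℕ
  k : ℕ
  hk : k ≤ d
  L : ℕ
  C : ℕ → Matrix (Fin d) (Fin d) ℤ
  A : ℕ → Matrix (Fin d) (Fin d) ℤ
  b : ℕ → Fin d → ℤ
  cls : (Fin d → ℝ) → Bool

/-- The state of the GNN after `t` layers: the initial state lists the truth values
of the atomic propositions `p_0, …, p_{k-1}` padded with zeros, and
`x_{t+1}(u) = σ(x_t(u)·C + (Σ_{(u,v)∈E} x_t(v))·A + b)`. -/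
noncomputable def GNN.state (N : GNN) {V : Type} [Fintype V] (G : LGraph V) :
    ℕ → V → Fin N.d → ℝ
  | 0 => fun u i => if i.val < N.k ∧ G.label u i.val = true then 1 else 0
  | t + 1 => fun u i =>
      clip ((∑ j, N.state G t u j * (N.C t j i : ℝ))
        + (∑ j, (∑ v ∈ Finset.univ.filter (fun v => G.edge u v = true), N.state G t v j)
            * (N.A t j i : ℝ))
        + (N.b t i : ℝ))

/-- The GNN accepts a pointed graph iff the classification function returns 1 (true)
on the final state. -/
def GNN.accepts (N : GNN) {V : Type} [Fintype V] (G : LGraph V) (u : V) : Prop :=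
  N.cls (N.state G N.L u) = true

mutual
/-- Modal depth of a `K^#` formula. -/
def KForm.md : KForm → ℕ
  | .atom _ => 0
  | .not φ => φ.md
  | .or φ ψ => max φ.md ψ.md
  | .ge0 E => E.md
/-- Modal depth of a `K^#` expression. -/
def KExpr.md : KExpr → ℕ
  | .const _ => 0
  | .ind φ => φ.md
  | .count φ => φ.md + 1
  | .add E₁ E₂ => max E₁.md E₂.md
  | .scale _ E => E.md
end

/-!
Within one modal level, a formula is built from atoms and nested tests `E ≥ 0`, where `E` is
linear in successor counts `#χ` of formulas `χ` of smaller depth plus terms that depend only on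
truth values at the current vertex. Unfolding the nesting, its truth value is a Boolean
combination of finitely many integer half-spaces in the indicators `1_χ` and counts `#χ` of such
lower formulas (and atoms). A clipped-ReLU layer with integer weights computes the indicator of
a half-space `0 ≤ z` as `σ(z + 1)`, and two further layers compute any Boolean function of
finitely many indicators through its disjunctive normal form. Each modal level thus costs three
layers, and induction on the depth gives `3 (md φ + 1)` layers.
-/

open Finset

section Halfspace

variable {M M' : Type} [AddCommGroup M] [AddCommGroup M']

def IsHalfspaceCombination (g : M → Bool) : Prop :=
  ∃ (κ : Type) (_ : Fintype κ) (ℓ : κ → M →+ ℤ) (b : κ → ℤ) (f : (κ → Bool) → Bool),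
    ∀ x, g x = f fun k => decide (0 ≤ ℓ k x + b k)

def IsPiecewiseAffine (s : M → ℤ) : Prop :=
  ∃ (ℓ₀ : M →+ ℤ) (κ : Type) (_ : Fintype κ) (ℓ : κ → M →+ ℤ) (b : κ → ℤ)
    (h : (κ → Bool) → ℤ), ∀ x, s x = ℓ₀ x + h fun k => decide (0 ≤ ℓ k x + b k)

namespace IsHalfspaceCombination

variable {g g' : M → Bool}

lemma halfspace (ℓ : M →+ ℤ) (b : ℤ) : IsHalfspaceCombination fun x => decide (0 ≤ ℓ x + b) :=
  ⟨Unit, inferInstance, fun _ => ℓ, fun _ => b, fun v => v (), fun _ => rfl⟩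

lemma not (hg : IsHalfspaceCombination g) : IsHalfspaceCombination fun x => !g x := by
  obtain ⟨κ, _, ℓ, b, f, hf⟩ := hg
  exact ⟨κ, inferInstance, ℓ, b, fun v => !f v, fun x => by dsimp only; rw [hf]⟩

lemma or (hg : IsHalfspaceCombination g) (hg' : IsHalfspaceCombination g') :
    IsHalfspaceCombination fun x => g x || g' x := by
  obtain ⟨κ, _, ℓ, b, f, hf⟩ := hg
  obtain ⟨κ', _, ℓ', b', f', hf'⟩ := hg'
  exact ⟨κ ⊕ κ', inferInstance, Sum.elim ℓ ℓ', Sum.elim b b',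
    fun v => f (v ∘ Sum.inl) || f' (v ∘ Sum.inr), fun x => by dsimp only; rw [hf, hf']; rfl⟩

lemma comp (hg : IsHalfspaceCombination g) (π : M' →+ M) :
    IsHalfspaceCombination fun x => g (π x) := by
  obtain ⟨κ, _, ℓ, b, f, hf⟩ := hg
  exact ⟨κ, inferInstance, fun k => (ℓ k).comp π, b, f, fun x => hf (π x)⟩

lemma isPiecewiseAffine_indicator (hg : IsHalfspaceCombination g) :
    IsPiecewiseAffine fun x => if g x then 1 else 0 := by
  obtain ⟨κ, _, ℓ, b, f, hf⟩ := hg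
  exact ⟨0, κ, inferInstance, ℓ, b, fun v => if f v then 1 else 0, fun x => by simp [hf]⟩

end IsHalfspaceCombination

namespace IsPiecewiseAffine

variable {s s' : M → ℤ}

lemma of_addMonoidHom (ℓ : M →+ ℤ) : IsPiecewiseAffine ℓ :=
  ⟨ℓ, Empty, inferInstance, Empty.elim, Empty.elim, fun _ => 0, fun _ => (add_zero _).symm⟩

lemma const (c : ℤ) : IsPiecewiseAffine fun _ : M => c :=
  ⟨0, Empty, inferInstance, Empty.elim, Empty.elim, fun _ => c, fun _ => (zero_add _).symm⟩

lemma add (hs : IsPiecewiseAffine s) (hs' : IsPiecewiseAffine s') :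
    IsPiecewiseAffine fun x => s x + s' x := by
  obtain ⟨ℓ₀, κ, _, ℓ, b, h, hh⟩ := hs
  obtain ⟨ℓ₀', κ', _, ℓ', b', h', hh'⟩ := hs'
  refine ⟨ℓ₀ + ℓ₀', κ ⊕ κ', inferInstance, Sum.elim ℓ ℓ', Sum.elim b b',
    fun v => h (v ∘ Sum.inl) + h' (v ∘ Sum.inr), fun x => ?_⟩
  dsimp only
  rw [hh, hh', AddMonoidHom.add_apply, add_add_add_comm]
  rfl

lemma const_mul (hs : IsPiecewiseAffine s) (c : ℤ) : IsPiecewiseAffine fun x => c * s x := by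
  obtain ⟨ℓ₀, κ, _, ℓ, b, h, hh⟩ := hs
  exact ⟨c • ℓ₀, κ, inferInstance, ℓ, b, fun v => c * h v, fun x => by
    dsimp only; rw [hh, mul_add, AddMonoidHom.smul_apply, smul_eq_mul]⟩

lemma comp (hs : IsPiecewiseAffine s) (π : M' →+ M) : IsPiecewiseAffine fun x => s (π x) := by
  obtain ⟨ℓ₀, κ, _, ℓ, b, h, hh⟩ := hs
  exact ⟨ℓ₀.comp π, κ, inferInstance, fun k => (ℓ k).comp π, b, h, fun x => hh (π x)⟩

/-- One extra half-space `0 ≤ ℓ₀ x + h β` for each sign pattern `β` of the old ones. -/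
lemma isHalfspaceCombination_nonneg (hs : IsPiecewiseAffine s) :
    IsHalfspaceCombination fun x => decide (0 ≤ s x) := by
  obtain ⟨ℓ₀, κ, _, ℓ, b, h, hh⟩ := hs
  exact ⟨κ ⊕ (κ → Bool), inferInstance, Sum.elim ℓ fun _ => ℓ₀, Sum.elim b h,
    fun v => v (.inr fun k => v (.inl k)), fun x => by dsimp only; rw [hh]; rfl⟩

end IsPiecewiseAffine

end Halfspace

lemma clip_intCast_add_one (z : ℤ) : clip ((z : ℝ) + 1) = if 0 ≤ z then 1 else 0 := by
  unfold clip
  split_ifs with h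
  · have : (0 : ℝ) ≤ z := by exact_mod_cast h
    rw [max_eq_right (by linarith), min_eq_right (by linarith)]
  · have : (z : ℝ) ≤ -1 := by exact_mod_cast (by omega : z ≤ -1)
    rw [max_eq_left (by linarith), min_eq_left zero_le_one]

def blockMatrix {d n : ℕ} (P : Matrix (Fin d) (Fin d) ℤ) (Q : Matrix (Fin d) (Fin n) ℤ) :
    Matrix (Fin (d + n)) (Fin (d + n)) ℤ :=
  Matrix.reindex finSumFinEquiv finSumFinEquiv (Matrix.fromBlocks P Q 0 0)

section blockMatrix

variable {d n : ℕ} (P : Matrix (Fin d) (Fin d) ℤ) (Q : Matrix (Fin d) (Fin n) ℤ)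
  (x : Fin (d + n) → ℝ)

lemma sum_mul_blockMatrix_castAdd (i : Fin d) :
    ∑ j, x j * (blockMatrix P Q j (Fin.castAdd n i) : ℝ) = ∑ j, x (Fin.castAdd n j) * P j i := by
  simp [Fin.sum_univ_add, blockMatrix]

lemma sum_mul_blockMatrix_natAdd (o : Fin n) :
    ∑ j, x j * (blockMatrix P Q j (Fin.natAdd d o) : ℝ) = ∑ j, x (Fin.castAdd n j) * Q j o := by
  simp [Fin.sum_univ_add, blockMatrix]

end blockMatrix

namespace GNN

/-- `N` followed by one layer writing `σ(xC + yA + b)` into `n` fresh coordinates, `x` and `y`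
being the final state of `N` at the vertex and summed over its successors. -/
abbrev addLayer (N : GNN) {n : ℕ} (C A : Matrix (Fin N.d) (Fin n) ℤ) (b : Fin n → ℤ) : GNN where
  d := N.d + n
  k := N.k
  hk := N.hk.trans (Nat.le_add_right _ _)
  L := N.L + 1
  C s := if s < N.L then blockMatrix (N.C s) 0 else blockMatrix 0 C
  A s := if s < N.L then blockMatrix (N.A s) 0 else blockMatrix 0 A
  b s := if s < N.L then Fin.append (N.b s) 0 else Fin.append 0 b
  cls _ := false

variable (N : GNN) {V : Type} [Fintype V] (G : LGraph V)

section addLayer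

variable {n : ℕ} (C A : Matrix (Fin N.d) (Fin n) ℤ) (b : Fin n → ℤ)

lemma addLayer_state_castAdd {s : ℕ} (hs : s ≤ N.L) (u : V) (i : Fin N.d) :
    (N.addLayer C A b).state G s u (Fin.castAdd n i) = N.state G s u i := by
  induction s generalizing u i with
  | zero => simp only [GNN.state, addLayer, Fin.val_castAdd]
  | succ s ih =>
    have hs' : s < N.L := hs
    simp only [GNN.state, if_pos hs', sum_mul_blockMatrix_castAdd, Fin.append_left, ih hs'.le]

lemma addLayer_state_natAdd (u : V) (o : Fin n) :
    (N.addLayer C A b).state G (N.L + 1) u (Fin.natAdd N.d o) =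
      clip (∑ j, N.state G N.L u j * C j o
        + ∑ j, (∑ v with G.edge u v = true, N.state G N.L v j) * A j o + b o) := by
  simp only [GNN.state, lt_irrefl, if_false, sum_mul_blockMatrix_natAdd, Fin.append_right,
    addLayer_state_castAdd N G C A b le_rfl]

end addLayer

lemma state_withCls (cls : (Fin N.d → ℝ) → Bool) (t : ℕ) :
    { N with cls := cls }.state G t = N.state G t := by
  induction t with
  | zero => rfl
  | succ t ih => funext u i; simp only [GNN.state, ih]

end GNN

abbrev VProp : Type 1 := (V : Type) → [Fintype V] → LGraph V → V → Bool

def features {ι : Type} (P : ι → VProp) {V : Type} [Fintype V] (G : LGraph V) (u : V) :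
    ι → ℤ × ℤ := fun i =>
  (if P i V G u then 1 else 0, (#{v | G.edge u v = true ∧ P i V G v = true} : ℤ))

def Realizable (t : ℕ) {ι : Type} (P : ι → VProp) : Prop :=
  ∃ (N : GNN) (e : ι → Fin N.d), N.L = t ∧
    ∀ (V : Type) [Fintype V] (G : LGraph V) (u : V) (i : ι),
      N.state G t u (e i) = if P i V G u then 1 else 0

lemma sum_mul_sum_fiber {ι κ : Type} [Fintype ι] [Fintype κ] [DecidableEq κ] (e : ι → κ)
    (x : κ → ℝ) (w : ι → ℤ) :
    ∑ j, x j * ((∑ i with e i = j, w i : ℤ) : ℝ) = ∑ i, x (e i) * w i := by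
  simp_rw [Int.cast_sum, mul_sum]
  rw [← sum_fiberwise univ e]
  refine sum_congr rfl fun j _ => sum_congr rfl fun i hi => ?_
  rw [(mem_filter.mp hi).2]

lemma sum_succ_indicator_eq_count (P : VProp) {V : Type} [Fintype V] (G : LGraph V) (u : V) :
    ∑ v with G.edge u v = true, (if P V G v then 1 else 0 : ℝ) =
      (#{v | G.edge u v = true ∧ P V G v = true} : ℤ) := by
  rw [sum_boole, filter_filter]
  norm_cast

lemma sign_mul_indicator_sum_sub_card_nonneg_iff {ι : Type} [Fintype ι] (x β : ι → Bool) :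
    0 ≤ ∑ i, (if β i then 1 else -1) * (if x i then 1 else 0) - (#{i | β i} : ℤ) ↔ x = β := by
  have hterm : ∀ i, ((if β i then 1 else -1) * (if x i then 1 else 0) - if β i then 1 else 0 : ℤ)
      = -if x i ≠ β i then 1 else 0 := fun i => by cases x i <;> cases β i <;> rfl
  rw [card_filter, Nat.cast_sum, ← sum_sub_distrib]
  push_cast
  simp only [hterm, sum_neg_distrib, sum_boole, neg_nonneg, Nat.cast_nonpos, card_eq_zero,
    filter_eq_empty_iff, mem_univ, true_implies, not_not, funext_iff]

lemma AddMonoidHom.apply_eq_sum_single {ι : Type} [Fintype ι] [DecidableEq ι]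
    (ℓ : (ι → ℤ × ℤ) →+ ℤ) (z : ι → ℤ × ℤ) :
    ℓ z = ∑ i, (ℓ (Pi.single i (1, 0)) * (z i).1 + ℓ (Pi.single i (0, 1)) * (z i).2) := by
  conv_lhs => rw [← univ_sum_single z]
  rw [map_sum]
  refine sum_congr rfl fun i _ => ?_
  have hzi : Pi.single i (z i) = (z i).1 • (Pi.single i (1, 0) : ι → ℤ × ℤ) +
      (z i).2 • (Pi.single i (0, 1) : ι → ℤ × ℤ) := by
    rw [← Pi.single_smul, ← Pi.single_smul, ← Pi.single_add]
    congr 1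
    ext <;> simp
  rw [hzi, map_add, map_zsmul, map_zsmul, smul_eq_mul, smul_eq_mul, mul_comm, mul_comm (z i).2]

namespace Realizable

variable {t : ℕ} {ι ω : Type} {P : ι → VProp}

lemma congr {Q : ι → VProp} (hP : Realizable t P)
    (h : ∀ i (V : Type) [Fintype V] (G : LGraph V) (u : V), P i V G u = Q i V G u) :
    Realizable t Q := by
  obtain ⟨N, e, hL, hN⟩ := hP
  exact ⟨N, e, hL, fun V _ G u i => by rw [hN, h]⟩

variable [Fintype ι] [Fintype ω]

theorem threshold (hP : Realizable t P) (c a : ω → ι → ℤ) (b : ω → ℤ) :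
    Realizable (t + 1) fun o _ _ G u =>
      decide (0 ≤ ∑ i, (c o i * (features P G u i).1 + a o i * (features P G u i).2) + b o) := by
  obtain ⟨N, e, rfl, hN⟩ := hP
  let r := (Fintype.equivFin ω).symm
  refine ⟨N.addLayer (.of fun j o => ∑ i with e i = j, c (r o) i)
    (.of fun j o => ∑ i with e i = j, a (r o) i) (fun o => b (r o) + 1),
    fun o => Fin.natAdd N.d (Fintype.equivFin ω o), rfl, fun V _ G u o => ?_⟩
  rw [GNN.addLayer_state_natAdd]
  simp only [Matrix.of_apply, sum_mul_sum_fiber, r, Equiv.symm_apply_apply, hN,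
    sum_succ_indicator_eq_count, decide_eq_true_eq]
  rw [← clip_intCast_add_one]
  push_cast [features, sum_add_distrib, mul_comm]
  congr 1
  ring

theorem boolCombination (hP : Realizable t P) (f : ω → (ι → Bool) → Bool) :
    Realizable (t + 2) fun o V _ G u => f o fun i => P i V G u := by
  have hcell : Realizable (t + 1) fun (β : ι → Bool) V _ G u => decide ((fun i => P i V G u) = β) :=
    (hP.threshold (fun β i => if β i then 1 else -1) 0 fun β => -#{i | β i}).congr
      fun β V _ G u => by
        simp only [features, Pi.zero_apply, zero_mul, add_zero, ← sub_eq_add_neg,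
          sign_mul_indicator_sum_sub_card_nonneg_iff]
  refine (hcell.threshold (fun o β => if f o β then 1 else 0) 0 fun _ => -1).congr
    fun o V _ G u => ?_
  simp only [features, Pi.zero_apply, zero_mul, add_zero, decide_eq_true_eq, mul_ite, mul_one,
    mul_zero, sum_ite_eq, mem_univ, if_true]
  cases f o fun i => P i V G u <;> decide

/-- One layer evaluates the half-spaces, two more their Boolean combination. -/
theorem halfspaceCombination (hP : Realizable t P) (g : ω → (ι → ℤ × ℤ) → Bool)
    (hg : ∀ o, IsHalfspaceCombination (g o)) :
    Realizable (t + 3) fun o _ _ G u => g o (features P G u) := by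
  choose κ _ ℓ b f hf using hg
  refine ((hP.threshold (fun q i => ℓ q.1 q.2 (Pi.single i (1, 0)))
    (fun q i => ℓ q.1 q.2 (Pi.single i (0, 1))) fun q : Σ o, κ o => b q.1 q.2).boolCombination
    fun o v => f o fun k => v ⟨o, k⟩).congr fun o V _ G u => ?_
  simp only [hf, ← AddMonoidHom.apply_eq_sum_single]

end Realizable

def KForm.toVProp (φ : KForm) : VProp := fun _ _ G u => φ.sat G u

def KForm.IsBelow (m : ℕ) (φ : KForm) : Prop := φ.md < m ∨ ∃ p, φ = .atom p

lemma KForm.IsBelow.mono {φ : KForm} {m n : ℕ} (h : φ.IsBelow m) (hmn : m ≤ n) :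
    φ.IsBelow n :=
  h.imp_left (·.trans_le hmn)

lemma KForm.IsBelow.md_le {φ : KForm} {m : ℕ} (h : φ.IsBelow (m + 1)) : φ.md ≤ m := by
  rcases h with h | ⟨p, rfl⟩
  · omega
  · exact Nat.zero_le m

def KForm.IsFlat (φ : KForm) : Prop :=
  ∃ (ι : Type) (_ : Fintype ι) (Λ : ι → KForm) (g : (ι → ℤ × ℤ) → Bool),
    (∀ i, (Λ i).IsBelow φ.md) ∧ IsHalfspaceCombination g ∧
    ∀ (V : Type) [Fintype V] (G : LGraph V) (u : V),
      φ.sat G u = g (features (KForm.toVProp ∘ Λ) G u)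

def KExpr.IsFlat (E : KExpr) : Prop :=
  ∃ (ι : Type) (_ : Fintype ι) (Λ : ι → KForm) (s : (ι → ℤ × ℤ) → ℤ),
    (∀ i, (Λ i).IsBelow E.md) ∧ IsPiecewiseAffine s ∧
    ∀ (V : Type) [Fintype V] (G : LGraph V) (u : V),
      E.val G u = s (features (KForm.toVProp ∘ Λ) G u)

abbrev restrictFeatures {ι ι' : Type} (r : ι' → ι) : (ι → ℤ × ℤ) →+ (ι' → ℤ × ℤ) :=
  (LinearMap.funLeft ℤ (ℤ × ℤ) r).toAddMonoidHom

abbrev featureCoord {ι : Type} (i : ι) (π : ℤ × ℤ →+ ℤ) : (ι → ℤ × ℤ) →+ ℤ :=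
  π.comp (Pi.evalAddMonoidHom _ i)

mutual

theorem KForm.isFlat : ∀ φ : KForm, φ.IsFlat
  | .atom p => ⟨Unit, inferInstance, fun _ => .atom p, fun z => decide (0 ≤ (z ()).1 + -1),
      fun _ => .inr ⟨p, rfl⟩, .halfspace (featureCoord () (AddMonoidHom.fst ℤ ℤ)) (-1),
      fun V _ G u => by
        cases h : G.label u p <;> simp [features, KForm.toVProp, KForm.sat, h]⟩
  | .not φ => by
    obtain ⟨ι, _, Λ, g, hΛ, hg, h⟩ := φ.isFlat
    exact ⟨ι, inferInstance, Λ, fun z => !g z, hΛ, hg.not, fun V _ G u => by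
      rw [KForm.sat, h]⟩
  | .or φ ψ => by
    obtain ⟨ι, _, Λ, g, hΛ, hg, h⟩ := φ.isFlat
    obtain ⟨ι', _, Λ', g', hΛ', hg', h'⟩ := ψ.isFlat
    refine ⟨ι ⊕ ι', inferInstance, Sum.elim Λ Λ',
      fun z => g (restrictFeatures Sum.inl z) || g' (restrictFeatures Sum.inr z),
      ?_, (hg.comp _).or (hg'.comp _), fun V _ G u => by rw [KForm.sat, h, h']; rfl⟩
    rintro (i | i)
    · exact (hΛ i).mono (le_max_left _ _)
    · exact (hΛ' i).mono (le_max_right _ _)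
  | .ge0 E => by
    obtain ⟨ι, _, Λ, s, hΛ, hs, h⟩ := E.isFlat
    exact ⟨ι, inferInstance, Λ, fun z => decide (0 ≤ s z), hΛ, hs.isHalfspaceCombination_nonneg,
      fun V _ G u => by rw [KForm.sat, h]⟩

theorem KExpr.isFlat : ∀ E : KExpr, E.IsFlat
  | .const c => ⟨Empty, inferInstance, Empty.elim, fun _ => c, Empty.rec, .const c,
      fun _ _ _ _ => rfl⟩
  | .ind φ => by
    obtain ⟨ι, _, Λ, g, hΛ, hg, h⟩ := φ.isFlat
    exact ⟨ι, inferInstance, Λ, fun z => if g z then 1 else 0, hΛ,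
      hg.isPiecewiseAffine_indicator, fun V _ G u => by rw [KExpr.val, h]⟩
  | .count φ => ⟨Unit, inferInstance, fun _ => φ, fun z => (z ()).2,
      fun _ => .inl (Nat.lt_succ_self _),
      .of_addMonoidHom (featureCoord () (AddMonoidHom.snd ℤ ℤ)), fun _ _ _ _ => rfl⟩
  | .add E₁ E₂ => by
    obtain ⟨ι, _, Λ, s, hΛ, hs, h⟩ := E₁.isFlat
    obtain ⟨ι', _, Λ', s', hΛ', hs', h'⟩ := E₂.isFlat
    refine ⟨ι ⊕ ι', inferInstance, Sum.elim Λ Λ',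
      fun z => s (restrictFeatures Sum.inl z) + s' (restrictFeatures Sum.inr z),
      ?_, (hs.comp _).add (hs'.comp _), fun V _ G u => by rw [KExpr.val, h, h']; rfl⟩
    rintro (i | i)
    · exact (hΛ i).mono (le_max_left _ _)
    · exact (hΛ' i).mono (le_max_right _ _)
  | .scale c E => by
    obtain ⟨ι, _, Λ, s, hΛ, hs, h⟩ := E.isFlat
    exact ⟨ι, inferInstance, Λ, fun z => c * s z, hΛ, hs.const_mul c, fun V _ G u => by
      rw [KExpr.val, h]⟩

end

lemma realizable_zero_of_forall_atom {ι : Type} [Fintype ι] (Λ : ι → KForm)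
    (hΛ : ∀ i, ∃ p, Λ i = .atom p) : Realizable 0 (KForm.toVProp ∘ Λ) := by
  choose p hp using hΛ
  have hlt : ∀ i, p i < univ.sup p + 1 := fun i => Nat.lt_succ_of_le (le_sup (mem_univ i))
  refine ⟨⟨_, _, le_rfl, 0, fun _ => 0, fun _ => 0, fun _ => 0, fun _ => false⟩,
    fun i => ⟨p i, hlt i⟩, rfl, fun V _ G u i => ?_⟩
  simp [GNN.state, KForm.toVProp, hp, KForm.sat, hlt]

theorem realizable_of_isBelow (m : ℕ) {ι : Type} [Fintype ι] (Λ : ι → KForm)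
    (hΛ : ∀ i, (Λ i).IsBelow m) : Realizable (3 * m) (KForm.toVProp ∘ Λ) := by
  induction m generalizing ι with
  | zero => exact realizable_zero_of_forall_atom Λ fun i => (hΛ i).resolve_left (Nat.not_lt_zero _)
  | succ m ih =>
    choose κ _ Λ' g hbelow hg hsat using fun i => (Λ i).isFlat
    have hlow := ih (fun q : Σ i, κ i => Λ' q.1 q.2) fun q => (hbelow q.1 q.2).mono (hΛ q.1).md_le
    exact (hlow.halfspaceCombination (fun i z => g i (restrictFeatures (Sigma.mk i) z))
      fun i => (hg i).comp _).congr fun i V _ G u => (hsat i V G u).symm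

/-- There is an absolute constant `c` such that every `K^#` formula `φ` is recognized
by a GNN (sum aggregation, integer-weight combinations `σ(xC+yA+b)`, classification
reading one component of the final state) with at most `c·(md(φ)+1)` layers. -/
theorem logic_to_gnn_few_layers :
    ∃ c : ℕ, ∀ φ : KForm, ∃ N : GNN,
      N.L ≤ c * (KForm.md φ + 1) ∧
      (∃ i : Fin N.d, ∀ x : Fin N.d → ℝ, N.cls x = decide (x i = 1)) ∧
      (∀ (V : Type) [Fintype V] (G : LGraph V) (u : V),
        N.accepts G u ↔ KForm.sat G u φ = true) := by
  refine ⟨3, fun φ => ?_⟩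
  obtain ⟨N, e, hL, hN⟩ :=
    realizable_of_isBelow (φ.md + 1) (fun _ : Unit => φ) fun _ => .inl (Nat.lt_succ_self _)
  refine ⟨{ N with cls := fun x => decide (x (e ()) = 1) }, hL.le, ⟨e (), fun _ => rfl⟩,
    fun V _ G u => ?_⟩
  rw [GNN.accepts, GNN.state_withCls, decide_eq_true_iff, hL, hN]
  cases h : φ.sat G u <;> simp [KForm.toVProp, h]
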